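/- arXiv:2510.22145 — 3 statements merged into one kernel-verified Lean document; each statement's English description precedes it below -/
import Mathlib

section
/- For any integers q ≥ 2 and m ≥ 2, with C_i defined as the set of vectors (f_2,...,f_m) with each f_j ∈ {1,...,q-1} and ∑_{j=2}^m f_j ≡ i (mod q) (representatives in {1,...,q}), the following holds: if m is even then exactly q-1 indices i ∈ {1,...,q} satisfy |C_i| = ((q-1)^(m-1) + 1)/q and exactly one index satisfies |C_i| = ((q-1)^(m-1) - q + 1)/q; if m is odd then exactly q-1 indices satisfy |C_i| = ((q-1)^(m-1) - 1)/q and exactly one satisfies |C_i| = ((q-1)^(m-1) + q - 1)/q. -/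
/-! For a finite abelian group `G` of order `q`, let `N_n(t)` be the number of `n`-tuples of
nonzero elements of `G` with sum `t`. Appending a last coordinate gives
`N_{n+1}(t) + N_n(t) = (q - 1)^n`: a tuple with sum `s ≠ t` extends in exactly one way (by
`t - s`), a tuple with sum `t` in none. Together with `N_0(t) = [t = 0]` this gives
`q N_n(t) = (q - 1)^n + (-1)^n (q [t = 0] - 1)`, so all nonzero residues share one count and
the residue `0`, i.e. the index `i = q`, has the other. -/

open Finset

section NonzeroTuples

variable (G : Type*) [AddCommGroup G] [Fintype G] [DecidableEq G]

def nonzeroTuplesWithSum (n : ℕ) (t : G) : Finset (Fin n → {x : G // x ≠ 0}) :=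
  univ.filter fun f => ∑ j, (f j : G) = t

variable {G}

theorem card_nonzero_subtype : Fintype.card {x : G // x ≠ 0} = Fintype.card G - 1 := by
  rw [Fintype.card_subtype_compl, Fintype.card_subtype_eq]

theorem card_filter_nonzero_add_eq (s t : G) :
    #(univ.filter fun a : {x : G // x ≠ 0} => (a : G) + s = t) = if s = t then 0 else 1 := by
  split_ifs with h
  · subst h
    exact card_eq_zero.2 <| filter_eq_empty_iff.2 fun a _ => by simpa using a.2
  · refine card_eq_one.2 ⟨⟨t - s, sub_ne_zero.2 (Ne.symm h)⟩, ?_⟩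
    ext a
    simp [Subtype.ext_iff, eq_sub_iff_add_eq]

theorem card_nonzeroTuplesWithSum_zero (t : G) :
    #(nonzeroTuplesWithSum G 0 t) = if t = 0 then 1 else 0 := by
  rcases eq_or_ne t 0 with h | h <;> simp [nonzeroTuplesWithSum, h, eq_comm]

theorem card_nonzeroTuplesWithSum_succ_add (n : ℕ) (t : G) :
    #(nonzeroTuplesWithSum G (n + 1) t) + #(nonzeroTuplesWithSum G n t) =
      (Fintype.card G - 1) ^ n := by
  have hsucc : #(nonzeroTuplesWithSum G (n + 1) t) =
      ∑ g : Fin n → {x : G // x ≠ 0}, if ∑ j, (g j : G) = t then 0 else 1 := by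
    rw [nonzeroTuplesWithSum, card_filter,
      ← Fintype.sum_equiv (Fin.consEquiv fun _ => {x : G // x ≠ 0})
        (fun p => if (p.1 : G) + ∑ j, (p.2 j : G) = t then 1 else 0) _
        (fun p => by simp [Fin.sum_univ_succ]),
      Fintype.sum_prod_type_right]
    refine Fintype.sum_congr _ _ fun g => ?_
    rw [← card_filter]
    convert card_filter_nonzero_add_eq (∑ j, (g j : G)) t
  rw [hsucc, nonzeroTuplesWithSum, card_filter, ← sum_add_distrib]
  simp only [ite_add_ite, zero_add, add_zero, ite_self, sum_const, card_univ,
    Fintype.card_fun, card_nonzero_subtype, Fintype.card_fin, smul_eq_mul, mul_one]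

theorem card_nonzeroTuplesWithSum_mul (n : ℕ) (t : G) :
    (Fintype.card G : ℤ) * #(nonzeroTuplesWithSum G n t) =
      (Fintype.card G - 1) ^ n +
        (-1) ^ n * ((if t = 0 then (Fintype.card G : ℤ) else 0) - 1) := by
  induction n with
  | zero => rw [card_nonzeroTuplesWithSum_zero]; split_ifs <;> simp
  | succ n ih =>
    have hrec := card_nonzeroTuplesWithSum_succ_add n t
    have hcard : 1 ≤ Fintype.card G := Fintype.card_pos
    zify [hcard] at hrec
    linear_combination (Fintype.card G : ℤ) * hrec - ih

theorem card_nonzeroTuplesWithSum_of_odd {n : ℕ} (hn : Odd n) (t : G) :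
    #(nonzeroTuplesWithSum G n t) = if t = 0
      then ((Fintype.card G - 1) ^ n + 1 - Fintype.card G) / Fintype.card G
      else ((Fintype.card G - 1) ^ n + 1) / Fintype.card G := by
  have hcard : 0 < Fintype.card G := Fintype.card_pos
  have hmul := card_nonzeroTuplesWithSum_mul n t
  have hnat : Fintype.card G * #(nonzeroTuplesWithSum G n t) +
      (if t = 0 then Fintype.card G else 0) = (Fintype.card G - 1) ^ n + 1 := by
    zify [hcard]
    rw [hn.neg_one_pow] at hmul
    split_ifs at hmul ⊢ <;> linear_combination hmul
  split_ifs at hnat ⊢ <;>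
    exact (Nat.div_eq_of_eq_mul_right hcard (by omega)).symm

theorem card_nonzeroTuplesWithSum_of_even {n : ℕ} (hn : Even n) (t : G) :
    #(nonzeroTuplesWithSum G n t) = if t = 0
      then ((Fintype.card G - 1) ^ n + Fintype.card G - 1) / Fintype.card G
      else ((Fintype.card G - 1) ^ n - 1) / Fintype.card G := by
  have hcard : 0 < Fintype.card G := Fintype.card_pos
  have hmul := card_nonzeroTuplesWithSum_mul n t
  have hnat : Fintype.card G * #(nonzeroTuplesWithSum G n t) + 1
      = (Fintype.card G - 1) ^ n + (if t = 0 then Fintype.card G else 0) := by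
    zify [hcard]
    rw [hn.neg_one_pow] at hmul
    split_ifs at hmul ⊢ <;> linear_combination hmul
  split_ifs at hnat ⊢ <;>
    exact (Nat.div_eq_of_eq_mul_right hcard (by omega)).symm

theorem card_nonzeroTuplesWithSum_zero_ne (n : ℕ) {t : G} (ht : t ≠ 0) :
    #(nonzeroTuplesWithSum G n 0) ≠ #(nonzeroTuplesWithSum G n t) := by
  intro h
  have h0 := card_nonzeroTuplesWithSum_mul n (0 : G)
  have h1 := card_nonzeroTuplesWithSum_mul n t
  rw [if_pos rfl] at h0
  rw [if_neg ht, ← h] at h1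
  have : ((-1) ^ n * Fintype.card G : ℤ) = 0 := by linear_combination h1 - h0
  simp at this

end NonzeroTuples

noncomputable def finSuccNonzeroEquiv (q : ℕ) [NeZero q] :
    Fin (q - 1) ≃ {x : ZMod q // x ≠ 0} :=
  Equiv.ofBijective
    (fun a => ⟨((a + 1 : ℕ) : ZMod q), fun h => by
      have := Nat.eq_zero_of_dvd_of_lt ((ZMod.natCast_eq_zero_iff _ _).1 h) (by omega)
      omega⟩)
    ((Fintype.bijective_iff_injective_and_card _).2
      ⟨fun a b h => by
        have h := (ZMod.natCast_eq_natCast_iff' _ _ q).1 (congrArg Subtype.val h)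
        rw [Nat.mod_eq_of_lt (by omega), Nat.mod_eq_of_lt (by omega)] at h
        exact Fin.ext (by omega),
       by rw [card_nonzero_subtype, ZMod.card, Fintype.card_fin]⟩)

theorem card_filter_sum_succ_mod_eq (q n i : ℕ) [NeZero q] :
    #(univ.filter fun f : Fin n → Fin (q - 1) => (∑ j, ((f j : ℕ) + 1)) % q = i % q) =
      #(nonzeroTuplesWithSum (ZMod q) n i) :=
  card_equiv ((Equiv.refl (Fin n)).arrowCongr (finSuccNonzeroEquiv q)) fun f => by
    simp [nonzeroTuplesWithSum, finSuccNonzeroEquiv, ← ZMod.natCast_eq_natCast_iff']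

theorem card_filter_Icc_ite_natCast_eq_zero (q : ℕ) [NeZero q] {A B : ℕ} (hAB : A ≠ B)
    (c : ℕ → ℕ) (hc : ∀ i, c i = if (i : ZMod q) = 0 then B else A) :
    #{i ∈ Icc 1 q | c i = A} = q - 1 ∧ #{i ∈ Icc 1 q | c i = B} = 1 := by
  have hzero : #{i ∈ Icc 1 q | ((i : ℕ) : ZMod q) = 0} = 1 := by
    refine card_eq_one.2 ⟨q, ?_⟩
    ext i
    simp only [mem_filter, mem_Icc, mem_singleton, ZMod.natCast_eq_zero_iff]
    constructor
    · rintro ⟨⟨hi1, hiq⟩, hdvd⟩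
      exact le_antisymm hiq (Nat.le_of_dvd (by omega) hdvd)
    · rintro rfl
      exact ⟨⟨NeZero.one_le, le_rfl⟩, dvd_rfl⟩
  have hsplit := card_filter_add_card_filter_not (s := Icc 1 q) (fun i : ℕ => (i : ZMod q) = 0)
  rw [hzero, Nat.card_Icc] at hsplit
  have hA : {i ∈ Icc 1 q | c i = A} = {i ∈ Icc 1 q | ¬((i : ℕ) : ZMod q) = 0} :=
    filter_congr fun i _ => by by_cases h : ((i : ℕ) : ZMod q) = 0 <;> simp [hc, h, Ne.symm hAB]
  have hB : {i ∈ Icc 1 q | c i = B} = {i ∈ Icc 1 q | ((i : ℕ) : ZMod q) = 0} :=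
    filter_congr fun i _ => by by_cases h : ((i : ℕ) : ZMod q) = 0 <;> simp [hc, h, hAB]
  exact ⟨by rw [hA]; omega, hB ▸ hzero⟩

open Finset in
/-- Proposition 3: counting vectors `(f_2,…,f_m) ∈ {1,…,q-1}^{m-1}` by the residue
class `i ∈ {1,…,q}` of their coordinate sum modulo `q`.  Each vector is encoded as
`f : Fin (m-1) → Fin (q-1)` with coordinate values `(f j) + 1 ∈ {1,…,q-1}`. -/
theorem stmt_4 (q m : ℕ) (hq : 2 ≤ q) (hm : 2 ≤ m) :
    let C : ℕ → Finset (Fin (m - 1) → Fin (q - 1)) := fun i =>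
      Finset.univ.filter (fun f => (∑ j, ((f j : ℕ) + 1)) % q = i % q)
    if Even m then
      ((Finset.Icc 1 q).filter
          (fun i => (C i).card = ((q - 1) ^ (m - 1) + 1) / q)).card = q - 1 ∧
      ((Finset.Icc 1 q).filter
          (fun i => (C i).card = ((q - 1) ^ (m - 1) + 1 - q) / q)).card = 1
    else
      ((Finset.Icc 1 q).filter
          (fun i => (C i).card = ((q - 1) ^ (m - 1) - 1) / q)).card = q - 1 ∧
      ((Finset.Icc 1 q).filter
          (fun i => (C i).card = ((q - 1) ^ (m - 1) + q - 1) / q)).card = 1 := by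
  intro C
  have : Fact (1 < q) := ⟨hq⟩
  have hne := card_nonzeroTuplesWithSum_zero_ne (m - 1) (one_ne_zero (α := ZMod q))
  split_ifs with heven
  · have hval := card_nonzeroTuplesWithSum_of_odd (G := ZMod q)
      (Nat.Even.sub_odd (by omega) heven odd_one)
    simp only [ZMod.card] at hval
    rw [hval, hval, if_pos rfl, if_neg one_ne_zero] at hne
    exact card_filter_Icc_ite_natCast_eq_zero q hne.symm _ fun i => by
      rw [card_filter_sum_succ_mod_eq, hval]
  · have hval := card_nonzeroTuplesWithSum_of_even (G := ZMod q)
      (Nat.Odd.sub_odd (Nat.not_even_iff_odd.1 heven) odd_one)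
    simp only [ZMod.card] at hval
    rw [hval, hval, if_pos rfl, if_neg one_ne_zero] at hne
    exact card_filter_Icc_ite_natCast_eq_zero q hne.symm _ fun i => by
      rw [card_filter_sum_succ_mod_eq, hval]
end

section
/- Let P be a (K,F,Z,S) PDA and for each column k define A_k = { j ∈ [F] : P(j,k) ≠ * }. Then for any permutation (i_1,...,i_K) of {1,...,K}, the number S of distinct integers in P satisfies S ≥ ∑_{h=1}^{K} |A_{i_1} ∩ A_{i_2} ∩ ... ∩ A_{i_h}|. -/
/-- A `(K,F,Z,S)` placement delivery array. -/
structure PDA (K F Z S : ℕ) where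
  P : Fin F → Fin K → Option (Fin S)
  col_stars : ∀ k : Fin K,
    (Finset.univ.filter (fun j : Fin F => P j k = none)).card = Z
  each_int_occurs : ∀ s : Fin S, ∃ j k, P j k = some s
  C3 : ∀ (j₁ j₂ : Fin F) (k₁ k₂ : Fin K) (s : Fin S),
    (j₁, k₁) ≠ (j₂, k₂) → P j₁ k₁ = some s → P j₂ k₂ = some s →
      j₁ ≠ j₂ ∧ k₁ ≠ k₂ ∧ P j₁ k₂ = none ∧ P j₂ k₁ = none

/-!
The integers at the cells `(x, σ h)` with `x ∈ A_{σ 0} ∩ ⋯ ∩ A_{σ h}` are pairwise distinct: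
if `(x₁, σ h₁)` and `(x₂, σ h₂)` with `h₁ ≤ h₂` carried the same integer at different
cells, the PDA condition would put a star at `(x₂, σ h₁)`, but `x₂ ∈ A_{σ h₁}`.
Counting these cells gives the bound.
-/

open Finset Function

namespace PDA

variable {K F Z S : ℕ} (A : PDA K F Z S)

/-- The paper's `A_{σ 0} ∩ ⋯ ∩ A_{σ h}`. -/
def prefixRows {n : ℕ} (σ : Fin n → Fin K) (h : Fin n) : Finset (Fin F) :=
  univ.filter fun x => ∀ j ≤ h, A.P x (σ j) ≠ none

theorem eq_of_apply_eq_some {j₁ j₂ : Fin F} {k₁ k₂ : Fin K} {s : Fin S}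
    (h₁ : A.P j₁ k₁ = some s) (h₂ : A.P j₂ k₂ = some s) (h : A.P j₂ k₁ ≠ none) :
    j₁ = j₂ ∧ k₁ = k₂ := by
  by_contra hne
  exact h (A.C3 j₁ j₂ k₁ k₂ s (by simpa [Prod.ext_iff] using hne) h₁ h₂).2.2.2

theorem eq_of_apply_eq_of_mem_prefixRows {n : ℕ} {σ : Fin n → Fin K} (hσ : Injective σ)
    {h₁ h₂ : Fin n} {x₁ x₂ : Fin F} (hle : h₁ ≤ h₂) (hx₂ : x₂ ∈ A.prefixRows σ h₂)
    (heq : A.P x₁ (σ h₁) = A.P x₂ (σ h₂)) : h₁ = h₂ ∧ x₁ = x₂ := by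
  have hx₂ : ∀ j ≤ h₂, A.P x₂ (σ j) ≠ none := (mem_filter.mp hx₂).2
  obtain ⟨s, hs⟩ := Option.ne_none_iff_exists'.mp (hx₂ h₂ le_rfl)
  obtain ⟨hx, hh⟩ := A.eq_of_apply_eq_some (heq.trans hs) hs (hx₂ h₁ hle)
  exact ⟨hσ hh, hx⟩

theorem injOn_apply_sigma_prefixRows {n : ℕ} {σ : Fin n → Fin K} (hσ : Injective σ) :
    Set.InjOn (fun p : (_ : Fin n) × Fin F => A.P p.2 (σ p.1))
      ((univ : Finset (Fin n)).sigma (A.prefixRows σ) : Set _) := by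
  rintro ⟨h₁, x₁⟩ hp₁ ⟨h₂, x₂⟩ hp₂ heq
  rw [mem_coe, mem_sigma] at hp₁ hp₂
  rcases le_total h₁ h₂ with hle | hle
  · obtain ⟨rfl, rfl⟩ := A.eq_of_apply_eq_of_mem_prefixRows hσ hle hp₂.2 heq
    rfl
  · obtain ⟨rfl, rfl⟩ := A.eq_of_apply_eq_of_mem_prefixRows hσ hle hp₁.2 heq.symm
    rfl

theorem sum_card_prefixRows_le {n : ℕ} {σ : Fin n → Fin K} (hσ : Injective σ) :
    ∑ h, (A.prefixRows σ h).card ≤ S := by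
  rw [← card_sigma]
  calc ((univ : Finset (Fin n)).sigma (A.prefixRows σ)).card
      ≤ (univ.erase none : Finset (Option (Fin S))).card := by
        refine card_le_card_of_injOn _ (fun p hp => ?_) (A.injOn_apply_sigma_prefixRows hσ)
        obtain ⟨-, hp⟩ := mem_sigma.mp hp
        exact mem_erase.mpr ⟨(mem_filter.mp hp).2 p.1 le_rfl, mem_univ _⟩
    _ = S := by simp

end PDA

/-- Theorem 1 of the paper: with `A_k = {j : P(j,k) ≠ *}` the non-star index set
of column `k`, for any permutation `σ` of the columns,
`S ≥ ∑_{h=1}^{K} |A_{σ(1)} ∩ ⋯ ∩ A_{σ(h)}|`. -/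
theorem stmt_10 (K F Z S : ℕ) (A : PDA K F Z S) (σ : Equiv.Perm (Fin K)) :
    let Ak : Fin K → Finset (Fin F) := fun k =>
      Finset.univ.filter (fun j => A.P j k ≠ none)
    ∑ h ∈ Finset.range K,
        (Finset.univ.filter
          (fun x : Fin F => ∀ j : Fin K, (j : ℕ) ≤ h → x ∈ Ak (σ j))).card ≤ S := by
  intro Ak
  rw [Finset.sum_range]
  convert A.sum_card_prefixRows_le σ.injective using 3 with h
  refine Finset.ext fun x => ?_
  simp only [Ak, PDA.prefixRows, mem_filter, mem_univ, true_and, Fin.le_def]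
end

section
/- Let P be a (K,F,Z,S) PDA with column non-star sets A_k. For any permutation (i_1,...,i_K) of [K], any h < h' in [K], any x1 ∈ A_{i_1} ∩ ... ∩ A_{i_h} and x2 ∈ A_{i_1} ∩ ... ∩ A_{i_{h'}} with x1 ≠ x2, the integer entries P(x1, i_h) and P(x2, i_{h'}) are distinct. -/
namespace PDA

variable {K F Z S : ℕ} (A : PDA K F Z S)

theorem P_eq_none_of_P_eq_some {j₁ j₂ : Fin F} {k₁ k₂ : Fin K} {s : Fin S} (hj : j₁ ≠ j₂)
    (h₁ : A.P j₁ k₁ = some s) (h₂ : A.P j₂ k₂ = some s) : A.P j₂ k₁ = none :=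
  (A.C3 j₁ j₂ k₁ k₂ s (fun hp => hj (congrArg Prod.fst hp)) h₁ h₂).2.2.2

theorem P_ne_of_ne_none {j₁ j₂ : Fin F} {k₁ k₂ : Fin K} (hj : j₁ ≠ j₂)
    (h₁ : A.P j₁ k₁ ≠ none) (h₂ : A.P j₂ k₁ ≠ none) : A.P j₁ k₁ ≠ A.P j₂ k₂ := by
  intro heq
  obtain ⟨s, hs⟩ := Option.ne_none_iff_exists'.mp h₁
  exact h₂ (A.P_eq_none_of_P_eq_some hj hs (heq ▸ hs))

end PDA

/-- The key distinctness claim in the proof of Theorem 1: for `h < h'`,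
`x₁ ∈ ⋂_{j ≤ h} A_{σ(j)}`, `x₂ ∈ ⋂_{j ≤ h'} A_{σ(j)}` with `x₁ ≠ x₂`, the
(integer) entries `P(x₁, σ(h))` and `P(x₂, σ(h'))` are distinct. -/
theorem stmt_11 (K F Z S : ℕ) (A : PDA K F Z S) (σ : Equiv.Perm (Fin K))
    (h h' : Fin K) (hhh' : h < h') (x₁ x₂ : Fin F) (hx : x₁ ≠ x₂)
    (hx₁ : ∀ j : Fin K, j ≤ h → A.P x₁ (σ j) ≠ none)
    (hx₂ : ∀ j : Fin K, j ≤ h' → A.P x₂ (σ j) ≠ none) :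
    A.P x₁ (σ h) ≠ A.P x₂ (σ h') :=
  A.P_ne_of_ne_none hx (hx₁ h le_rfl) (hx₂ h hhh'.le)
end
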